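/- Let k ≥ 2 be an integer and let p > 2 be a prime. For every a ∈ Z(p) (i.e., every nonzero k-th power residue a modulo p), the number of k-th power residues b ∈ ℤ_{p^{2k}} with b ≡ a (mod p) equals p^{2k − 1 − τ(k,p)}, where τ(k,p) is the exponent of p in k; that is, |{b ∈ ℤ_{p^{2k}}^{(k)} : b ≡ a (mod p)}| = p^{2k−1−τ(k,p)}, where ℤ_m^{(k)} = {t^k : t ∈ ℤ_m}. -/

import Mathlib

open Finset Filter

/-- `τ(k,p)`: the exponent of the prime `p` in `k`. -/
def tauP (k p : ℕ) : ℕ := k.factorization p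

/-- `γ(k,p) = τ(k,p)+2` if `p = 2` and `τ(k,p) > 0`, else `τ(k,p)+1`. -/
def gammaP (k p : ℕ) : ℕ :=
  if p = 2 ∧ 0 < tauP k p then tauP k p + 2 else tauP k p + 1

/-- `R_k = ∏_{(p-1) ∣ k} p^{γ(k,p)}` (product over primes `p` with `(p-1) ∣ k`;
any such prime satisfies `p ≤ k+1`). -/
def Rk (k : ℕ) : ℕ :=
  ∏ p ∈ (Finset.range (k + 2)).filter (fun p => p.Prime ∧ (p - 1) ∣ k), p ^ gammaP k p

/-- `W = ∏_{1 < p ≤ w} p^{2k}` (product over primes `p ≤ w`). -/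
noncomputable def Wfun (k : ℕ) (w : ℝ) : ℕ :=
  ∏ p ∈ (Finset.range (⌊w⌋₊ + 1)).filter Nat.Prime, p ^ (2 * k)

/-- `Z(m) = {a ∈ ℤ_m : a is a k-th power and (a,m) = 1}`. -/
def Zset (k m : ℕ) : Set (ZMod m) := {a | (∃ t : ZMod m, t ^ k = a) ∧ IsUnit a}

/-- `(q,s)` is a Waring pair: for any `B ⊆ Z(q)` with `|B| > |Z(q)|/2`, the `s`-fold
sumset of `B` equals `{a ∈ ℤ_q : a ≡ s (mod gcd(R_k, q))}`. -/
def WaringPair (k q s : ℕ) : Prop :=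
  ∀ B : Finset (ZMod q), ↑B ⊆ Zset k q → (Zset k q).ncard < 2 * B.card →
    {a : ZMod q | ∃ b : Fin s → ZMod q, (∀ i, b i ∈ B) ∧ a = ∑ i, b i} =
      {a : ZMod q | ZMod.castHom (Nat.gcd_dvd_right (Rk k) q)
          (ZMod (Nat.gcd (Rk k) q)) a = (s : ZMod (Nat.gcd (Rk k) q))}

open Classical in
/-- The lower density of `A` relative to the primes:
`liminf_{N → ∞} |A ∩ [N]| / |ℙ ∩ [N]|`. -/
noncomputable def lowerDensity (A : Set ℕ) : ℝ :=
  Filter.liminf (fun N : ℕ =>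
    (((Finset.Icc 1 N).filter (· ∈ A)).card : ℝ) /
      (((Finset.Icc 1 N).filter Nat.Prime).card : ℝ)) Filter.atTop

open Classical in
/-- `π_P(N) = #{n ≤ N : n ∈ P}`. -/
noncomputable def primeCount (P : Set ℕ) (N : ℕ) : ℕ :=
  ((Finset.Icc 1 N).filter (· ∈ P)).card

/-- `w = log log log n₀`. -/
noncomputable def www (n₀ : ℕ) : ℝ := Real.log (Real.log (Real.log n₀))

/-- The `W` of the W-trick: `W = ∏_{1 < p ≤ log log log n₀} p^{2k}`. -/
noncomputable def WW (k n₀ : ℕ) : ℕ := Wfun k (www n₀)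

/-- `N = ⌊2n₀ / (sW)⌋`. -/
noncomputable def NN (k s n₀ : ℕ) : ℕ := 2 * n₀ / (s * WW k n₀)

/-- `σ(b) = #{z ∈ [W] : z^k ≡ b (mod W)}`. -/
def sigmaB (k W b : ℕ) : ℕ :=
  ((Finset.Icc 1 W).filter (fun z => z ^ k % W = b % W)).card

open Classical in
/-- The set of `b ∈ [W]` with `b mod W ∈ Z(W)`, as a finset of naturals. -/
noncomputable def ZFinset (k W : ℕ) : Finset ℕ :=
  (Finset.Icc 1 W).filter (fun b => (b : ZMod W) ∈ Zset k W)

open Classical in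
/-- `f_b(n) = (φ(W)/(W σ(b))) k p^{k-1} log p` if `Wn + b = p^k` with `p ∈ A`, else `0`. -/
noncomputable def fWeight (A : Set ℕ) (k W b n : ℕ) : ℝ :=
  ∑ p ∈ (Finset.range (W * n + b + 1)).filter (fun p => p ∈ A ∧ W * n + b = p ^ k),
    (W.totient : ℝ) / ((W : ℝ) * (sigmaB k W b : ℝ)) *
      ((k : ℝ) * (p : ℝ) ^ (k - 1) * Real.log p)

/-- `ν_b(n) = (φ(W)/(W σ(b))) k p^{k-1} log p` if `Wn + b = p^k` with `p` prime, else `0`. -/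
noncomputable def nuB (k W b : ℕ) : ℕ → ℝ := fWeight {p | p.Prime} k W b

/-- `g(b, N) = 𝔼_{n ∈ [N]} f_b(n)`. -/
noncomputable def gAvg (A : Set ℕ) (k W b N : ℕ) : ℝ :=
  (∑ n ∈ Finset.Icc 1 N, fWeight A k W b n) / (N : ℝ)

/-- Fourier transform `f̂(α) = Σ_{n ∈ [N]} f(n) e(nα)` of a function supported on `[N]`. -/
noncomputable def fourierT (f : ℕ → ℝ) (N : ℕ) (α : ℝ) : ℂ :=
  ∑ n ∈ Finset.Icc 1 N,
    (f n : ℂ) * Complex.exp (2 * (Real.pi : ℂ) * Complex.I * (n : ℂ) * (α : ℂ))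

/-- `L = log (WN + W)^{1/k} = (1/k) log(WN + W)`. -/
noncomputable def LL (k s n₀ : ℕ) : ℝ :=
  Real.log ((WW k n₀ : ℝ) * (NN k s n₀ : ℝ) + (WW k n₀ : ℝ)) / (k : ℝ)

/-- `α` lies in the minor arcs `𝔪 = 𝕋 \ 𝔐`, where `𝔐` is the union of the arcs
`{α : |α - a/q| ≤ 1/Q}` over `1 ≤ q ≤ P` and integers `a` with `gcd(a,q) = 1`. -/
def minorArc (P Q α : ℝ) : Prop :=
  ¬ ∃ q : ℕ, ∃ a : ℤ, 1 ≤ q ∧ (q : ℝ) ≤ P ∧ Int.gcd a q = 1 ∧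
      |α - (a : ℝ) / (q : ℝ)| ≤ 1 / Q

/-- `S_q^*(a,z) = Σ_{0 ≤ r < q, (z+Wr, Wq)=1} e_q(a((z+Wr)^k - b)/W)`. -/
noncomputable def SqStar (k W q : ℕ) (a b z : ℤ) : ℂ :=
  ∑ r ∈ Finset.range q,
    if Int.gcd (z + (W : ℤ) * r) ((W : ℤ) * q) = 1 then
      Complex.exp (2 * (Real.pi : ℂ) * Complex.I *
        ((a : ℂ) * ((((z + (W : ℤ) * r) ^ k - b : ℤ) : ℂ)) / ((W : ℂ) * (q : ℂ))))
    else 0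

/-- `I(β) = ∫₀^N e(βt) dt`. -/
noncomputable def Ibeta (N : ℕ) (β : ℝ) : ℂ :=
  ∫ t in (0:ℝ)..(N : ℝ), Complex.exp (2 * (Real.pi : ℂ) * Complex.I * ((β : ℂ) * (t : ℂ)))

/-! For odd `p` the group `(ℤ/p^n)ˣ` is cyclic, so its subgroup of `k`-th powers has order
`φ(p^n) / gcd(φ(p^n), k)`, which is `p^(n-1-τ)` times the order of the subgroup of `k`-th powers
of `(ℤ/p)ˣ` as soon as `τ < n`. Reduction mod `p` maps the first subgroup onto the second, so all
its fibres have `p^(n-1-τ)` elements; and a `k`-th power mod `p^n` reducing to a unit is a unit. -/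

theorem MonoidHom.ncard_fiber_mul_card_range {G M : Type*} [Group G] [Finite G] [Group M]
    (f : G →* M) {y : M} (hy : y ∈ f.range) :
    {g | f g = y}.ncard * Nat.card f.range = Nat.card G := by
  obtain ⟨g₀, rfl⟩ := hy
  have hfiber : {g | f g = f g₀} = (g₀ * ·) '' (f.ker : Set G) := by
    ext g
    simp only [Set.mem_ofPred_eq, Set.mem_image, SetLike.mem_coe, MonoidHom.mem_ker]
    refine ⟨fun h => ⟨g₀⁻¹ * g, by simp [h], by simp⟩, ?_⟩
    rintro ⟨x, hx, rfl⟩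
    simp [hx]
  rw [hfiber, Set.ncard_image_of_injective _ (mul_right_injective g₀), ← Nat.card_coe_set_eq,
    SetLike.coe_sort_coe, ← Subgroup.index_ker, Subgroup.card_mul_index]

theorem MonoidHom.map_powMonoidHom_range {G M : Type*} [CommGroup G] [CommGroup M]
    {f : G →* M} (hf : Function.Surjective f) (k : ℕ) :
    (powMonoidHom k : G →* G).range.map f = (powMonoidHom k : M →* M).range := by
  have hcomm : f.comp (powMonoidHom k) = (powMonoidHom k).comp f := by ext; simp
  rw [MonoidHom.map_range, hcomm, MonoidHom.range_comp, f.range_eq_top_of_surjective hf,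
    ← MonoidHom.range_eq_map]

theorem Nat.gcd_prime_pow_eq_ordProj {p n k : ℕ} (hp : p.Prime) (hk : k ≠ 0)
    (h : k.factorization p ≤ n) : (p ^ n).gcd k = p ^ k.factorization p := by
  have hcop : (p ^ (n - k.factorization p)).Coprime (k / p ^ k.factorization p) :=
    (Nat.coprime_ordCompl hp hk).pow_left _
  conv_lhs => rw [← Nat.ordProj_mul_ordCompl_eq_self k p, ← Nat.pow_sub_mul_pow p h, mul_comm,
    Nat.gcd_mul_left, hcop.gcd_eq_one, mul_one]

theorem ZMod.card_powMonoidHom_range_units_prime_pow {p : ℕ} (hp : p.Prime) (hp2 : p ≠ 2)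
    {n k : ℕ} (hk : k ≠ 0) (hn : k.factorization p < n) :
    Nat.card (powMonoidHom k : (ZMod (p ^ n))ˣ →* _).range =
      p ^ (n - 1 - k.factorization p) * Nat.card (powMonoidHom k : (ZMod p)ˣ →* _).range := by
  have : NeZero p := ⟨hp.ne_zero⟩
  have := ZMod.isCyclic_units_of_prime_pow p hp hp2 n
  have := ZMod.isCyclic_units_prime hp
  rw [IsCyclic.card_powMonoidHom_range, IsCyclic.card_powMonoidHom_range,
    Nat.card_eq_fintype_card, Nat.card_eq_fintype_card, ZMod.card_units_eq_totient,
    ZMod.card_units_eq_totient, Nat.totient_prime_pow hp (by omega), Nat.totient_prime hp]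
  have hcop : (p ^ (n - 1)).Coprime (p - 1) :=
    ((Nat.coprime_self_sub_right hp.one_le).mpr (Nat.coprime_one_right p)).pow_left _
  rw [Nat.gcd_comm, hcop.gcd_mul, Nat.gcd_comm k, Nat.gcd_comm k,
    Nat.gcd_prime_pow_eq_ordProj hp hk (by omega),
    ← Nat.pow_sub_mul_pow p (show k.factorization p ≤ n - 1 by omega)]
  obtain ⟨r, hr⟩ := Nat.gcd_dvd_left (p - 1) k
  have hg : 0 < (p - 1).gcd k := Nat.gcd_pos_of_pos_right _ (Nat.pos_of_ne_zero hk)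
  generalize (p - 1).gcd k = g at hr hg ⊢
  have := hp.pos
  rw [hr, Nat.mul_div_cancel_left r hg]
  exact Nat.div_eq_of_eq_mul_left (by positivity) (by ring)

theorem ZMod.isUnit_of_isUnit_castHom_pow {p n : ℕ} [NeZero p] (hn : n ≠ 0) {b : ZMod (p ^ n)}
    (hb : IsUnit (ZMod.castHom (dvd_pow_self p hn) (ZMod p) b)) : IsUnit b := by
  rw [← ZMod.natCast_zmod_val b, map_natCast, ZMod.isUnit_iff_coprime] at hb
  rw [← ZMod.natCast_zmod_val b, ZMod.isUnit_iff_coprime]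
  exact hb.pow_right n

theorem ZMod.setOf_pow_castHom_eq_image {p n k : ℕ} [NeZero p] (hn : n ≠ 0) (hk : k ≠ 0)
    (u : (ZMod p)ˣ) :
    {b : ZMod (p ^ n) | (∃ t, t ^ k = b) ∧ ZMod.castHom (dvd_pow_self p hn) (ZMod p) b = u} =
      (fun x : (powMonoidHom k : (ZMod (p ^ n))ˣ →* _).range =>
        ((x : (ZMod (p ^ n))ˣ) : ZMod (p ^ n))) '' {x | ZMod.unitsMap (dvd_pow_self p hn) x = u} := by
  ext b
  constructor
  · rintro ⟨⟨t, rfl⟩, hb⟩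
    have ht : IsUnit t :=
      (isUnit_pow_iff hk).mp (ZMod.isUnit_of_isUnit_castHom_pow hn (hb ▸ u.isUnit))
    refine ⟨⟨ht.unit ^ k, ht.unit, rfl⟩, Units.ext ?_, by simp⟩
    rw [ZMod.unitsMap_val, Units.val_pow_eq_pow_val, IsUnit.unit_spec]
    exact hb
  · rintro ⟨⟨_, s, rfl⟩, hs, rfl⟩
    exact ⟨⟨s, by simp⟩, by simpa [Units.ext_iff, ZMod.unitsMap_val] using hs⟩

/-- Lemma 4.3: for a prime `p > 2` and `a ∈ Z(p)`, the number of k-th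
powers `b ∈ ℤ_{p^{2k}}` with `b ≡ a (mod p)` is `p^{2k-1-τ(k,p)}`. -/
theorem statement3 (k : ℕ) (hk : 2 ≤ k) (p : ℕ) (hp : p.Prime) (hp2 : 2 < p)
    (a : ZMod p) (ha : a ∈ Zset k p) :
    {b : ZMod (p ^ (2 * k)) | (∃ t : ZMod (p ^ (2 * k)), t ^ k = b) ∧
        ZMod.castHom (dvd_pow_self p (show 2 * k ≠ 0 by omega)) (ZMod p) b = a}.ncard =
      p ^ (2 * k - 1 - tauP k p) := by
  have : NeZero p := ⟨hp.ne_zero⟩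
  obtain ⟨⟨t, rfl⟩, ha⟩ := ha
  have ht : IsUnit t := (isUnit_pow_iff (by omega)).mp ha
  have hτ : tauP k p < 2 * k := (Nat.factorization_lt p (by omega)).trans (by omega)
  set φ := (ZMod.unitsMap (dvd_pow_self p (show 2 * k ≠ 0 by omega))).domRestrict
    (powMonoidHom k : (ZMod (p ^ (2 * k)))ˣ →* _).range
  have hrange : φ.range = (powMonoidHom k).range := by
    rw [MonoidHom.domRestrict_range,
      MonoidHom.map_powMonoidHom_range (ZMod.unitsMap_surjective _)]
  have hfiber := φ.ncard_fiber_mul_card_range (y := ht.unit ^ k) (hrange ▸ ⟨ht.unit, rfl⟩)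
  rw [hrange, ZMod.card_powMonoidHom_range_units_prime_pow hp (by omega) (by omega) hτ]
    at hfiber
  have hset := ZMod.setOf_pow_castHom_eq_image (show 2 * k ≠ 0 by omega) (show k ≠ 0 by omega)
    (ht.unit ^ k)
  simp only [Units.val_pow_eq_pow_val, IsUnit.unit_spec] at hset
  rw [hset, Set.ncard_image_of_injective _ fun x y h => Subtype.ext (Units.ext h)]
  exact Nat.eq_of_mul_eq_mul_right Nat.card_pos hfiber
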